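/- Let (Xₙ)_{n ≥ 1} be a second-order (weakly) stationary sequence of real-valued square-integrable random variables such that Var(X₁) + 2·Σ_{j=2}^∞ |Cov(X₁, X_j)| < ∞. Then, with Sₙ = X₁ + ⋯ + Xₙ, one has Var(Sₙ/√n) → σ² := Var(X₁) + 2·Σ_{j=2}^∞ Cov(X₁, X_j) as n → ∞. -/

import Mathlib

/-!
The covariance matrix of `X₀, …, X_{n-1}` is Toeplitz: its entries depend only on `j - i`.
Adding the `m`-th row and column to the upper-left `m × m` block therefore adds
`c₀ + 2 (c₁ + ⋯ + c_m)`, the `m`-th partial sum of the series defining `σ²`. So `Var(Sₙ)/n`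
is the Cesàro mean of these partial sums and converges to `σ²` as soon as the series converges,
which absolute summability guarantees.
-/

open MeasureTheory ProbabilityTheory Filter Finset

noncomputable def cov {Ω : Type*} [MeasurableSpace Ω] (μ : Measure Ω) (X Y : Ω → ℝ) : ℝ :=
  (∫ ω, X ω * Y ω ∂μ) - (∫ ω, X ω ∂μ) * (∫ ω, Y ω ∂μ)

lemma cov_eq_covariance {Ω : Type*} [MeasurableSpace Ω] {μ : Measure Ω} [IsProbabilityMeasure μ]
    {X Y : Ω → ℝ} (hX : MemLp X 2 μ) (hY : MemLp Y 2 μ) : cov μ X Y = cov[X, Y; μ] := by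
  rw [covariance_eq_sub hX hY, cov]
  rfl

lemma variance_fun_div {Ω : Type*} [MeasurableSpace Ω] (c : ℝ) (X : Ω → ℝ) (μ : Measure Ω) :
    Var[fun ω ↦ X ω / c; μ] = Var[X; μ] / c ^ 2 := by
  simp_rw [div_eq_mul_inv, variance_mul_const, inv_pow]

namespace Finset

lemma sum_range_sum_range_of_symm {R : Type*} [NonAssocSemiring R] (d : ℕ → ℕ → R)
    (hd : ∀ i j, d i j = d j i) (n : ℕ) :
    ∑ i ∈ range n, ∑ j ∈ range n, d i j = ∑ m ∈ range n, (d m m + 2 * ∑ i ∈ range m, d i m) := by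
  induction n with
  | zero => simp
  | succ n ih =>
    have hcol : ∑ j ∈ range n, d n j = ∑ i ∈ range n, d i n := sum_congr rfl fun j _ ↦ hd n j
    simp only [sum_range_succ, sum_add_distrib, ih, hcol]
    rw [two_mul]
    abel

lemma sum_range_sum_range_of_toeplitz {R : Type*} [NonAssocSemiring R] (d : ℕ → ℕ → R)
    (c : ℕ → R) (hd : ∀ i j, d i j = d j i) (hc : ∀ i j, i ≤ j → d i j = c (j - i)) (n : ℕ) :
    ∑ i ∈ range n, ∑ j ∈ range n, d i j = ∑ m ∈ range n, (c 0 + 2 * ∑ k ∈ range m, c (k + 1)) := by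
  rw [sum_range_sum_range_of_symm d hd]
  refine sum_congr rfl fun m _ ↦ ?_
  have hrow : ∑ i ∈ range m, d i m = ∑ k ∈ range m, c (k + 1) := by
    rw [← sum_range_reflect]
    refine sum_congr rfl fun k hk ↦ ?_
    have hk : k < m := mem_range.mp hk
    rw [hc _ _ (by omega)]
    congr 1
    omega
  rw [hrow, hc m m le_rfl, Nat.sub_self]

end Finset

lemma variance_sum_range_of_toeplitz {Ω : Type*} [MeasurableSpace Ω] {μ : Measure Ω}
    [IsProbabilityMeasure μ] {X : ℕ → Ω → ℝ} (hX : ∀ n, MemLp (X n) 2 μ) (c : ℕ → ℝ)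
    (hc : ∀ i j, i ≤ j → cov[X i, X j; μ] = c (j - i)) (n : ℕ) :
    Var[fun ω ↦ ∑ i ∈ range n, X i ω; μ]
      = ∑ m ∈ range n, (c 0 + 2 * ∑ k ∈ range m, c (k + 1)) := by
  have hS : MemLp (fun ω ↦ ∑ i ∈ range n, X i ω) 2 μ := memLp_finsetSum _ fun i _ ↦ hX i
  rw [← covariance_self hS.aemeasurable,
    covariance_fun_sum_fun_sum' (fun i _ ↦ hX i) (fun i _ ↦ hX i)]
  exact sum_range_sum_range_of_toeplitz _ c (fun i j ↦ covariance_comm _ _) hc n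

-- The sequence is indexed from `0`: `X i` is the paper's `X_{i+1}`.
theorem variance_partial_sums_tendsto_of_second_order_stationary_general
    {Ω : Type*} [MeasurableSpace Ω] (μ : Measure Ω) [IsProbabilityMeasure μ]
    (X : ℕ → Ω → ℝ) (hX2 : ∀ n, MemLp (X n) 2 μ)
    (hstat : ∀ i j : ℕ, i ≤ j → cov μ (X i) (X j) = cov μ (X 0) (X (j - i)))
    (hsum : Summable (fun j : ℕ => |cov μ (X 0) (X (j + 1))|)) :
    Tendsto
      (fun n : ℕ =>
        variance (fun ω => (∑ i ∈ Finset.range n, X i ω) / Real.sqrt n) μ)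
      atTop
      (nhds (variance (X 0) μ + 2 * ∑' j : ℕ, cov μ (X 0) (X (j + 1)))) := by
  set c : ℕ → ℝ := fun k ↦ cov μ (X 0) (X k)
  have hc : ∀ i j, i ≤ j → cov[X i, X j; μ] = c (j - i) := fun i j hij ↦ by
    rw [← cov_eq_covariance (hX2 i) (hX2 j), hstat i j hij]
  have hc0 : Var[X 0; μ] = c 0 := by
    rw [← covariance_self (hX2 0).aemeasurable, ← cov_eq_covariance (hX2 0) (hX2 0)]
  have hpartial : Tendsto (fun m ↦ c 0 + 2 * ∑ k ∈ range m, c (k + 1)) atTop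
      (nhds (c 0 + 2 * ∑' k, c (k + 1))) :=
    tendsto_const_nhds.add (hsum.of_abs.hasSum.tendsto_sum_nat.const_mul 2)
  rw [hc0]
  refine hpartial.cesaro.congr fun n ↦ ?_
  rw [variance_fun_div, variance_sum_range_of_toeplitz hX2 c hc,
    Real.sq_sqrt n.cast_nonneg, inv_mul_eq_div]

/-- For a second-order stationary sequence `(Xₙ)ₙ≥₁` (here indexed from `0`, so `X i`
stands for `X_{i+1}`) with `Var(X₁) + 2 ∑_{j≥2} |Cov(X₁, X_j)| < ∞`, one has
`Var(Sₙ/√n) → σ² = Var(X₁) + 2 ∑_{j≥2} Cov(X₁, X_j)`. -/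
theorem variance_partial_sums_tendsto_of_second_order_stationary
    {Ω : Type*} [MeasurableSpace Ω] (μ : Measure Ω) [IsProbabilityMeasure μ]
    (X : ℕ → Ω → ℝ) (hX : ∀ n, Measurable (X n)) (hX2 : ∀ n, MemLp (X n) 2 μ)
    (hmean : ∀ n, ∫ ω, X n ω ∂μ = ∫ ω, X 0 ω ∂μ)
    (hstat : ∀ i j : ℕ, i ≤ j → cov μ (X i) (X j) = cov μ (X 0) (X (j - i)))
    (hsum : Summable (fun j : ℕ => |cov μ (X 0) (X (j + 1))|)) :
    Tendsto
      (fun n : ℕ =>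
        variance (fun ω => (∑ i ∈ Finset.range n, X i ω) / Real.sqrt n) μ)
      atTop
      (nhds (variance (X 0) μ + 2 * ∑' j : ℕ, cov μ (X 0) (X (j + 1)))) :=
  variance_partial_sums_tendsto_of_second_order_stationary_general μ X hX2 hstat hsum
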